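/- Let p and q be distinct primes, both congruent to 3 modulo 4, and N = p·q. Then the squaring map x ↦ x² is a bijection from the set of quadratic residues in (ZMod N)ˣ to itself. -/
import Mathlib

theorem stmt_6 (p q : ℕ) (hp : p.Prime) (hq : q.Prime) (hpq : p ≠ q)
    (hp4 : p % 4 = 3) (hq4 : q % 4 = 3) :
    Set.BijOn (fun x : (ZMod (p * q))ˣ => x ^ 2)
      {a : (ZMod (p * q))ˣ | IsSquare a} {a : (ZMod (p * q))ˣ | IsSquare a} := by
  have hco : Nat.Coprime p q := (Nat.coprime_primes hp hq).mpr hpq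
  have hN : NeZero (p * q) := ⟨Nat.mul_ne_zero hp.pos.ne' hq.pos.ne'⟩
  -- key: a square unit whose square is 1 must be 1
  have comp : ∀ (r : ℕ), r.Prime → r % 4 = 3 → ∀ (hd : r ∣ p * q) (z : (ZMod (p*q))ˣ),
      IsSquare z → z ^ 2 = 1 → ZMod.castHom hd (ZMod r) (z : ZMod (p*q)) = 1 := by
    intro r hr hr4 hd z hz h1
    haveI : Fact r.Prime := ⟨hr⟩
    set f := ZMod.castHom hd (ZMod r) with hf
    have hsq : f (z : ZMod (p*q)) ^ 2 = 1 := by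
      rw [← map_pow]
      have : ((z : (ZMod (p*q))ˣ) : ZMod (p*q)) ^ 2 = 1 := by
        rw [← Units.val_pow_eq_pow_val, h1, Units.val_one]
      rw [this, map_one]
    rcases sq_eq_one_iff.mp hsq with h | h
    · exact h
    · exfalso
      obtain ⟨w, hw⟩ := hz
      have : IsSquare (-1 : ZMod r) := by
        rw [← h]
        exact ⟨f (w : ZMod (p*q)), by rw [← map_mul, ← Units.val_mul, ← hw]⟩
      exact (ZMod.exists_sq_eq_neg_one_iff.mp this) hr4
  have key : ∀ z : (ZMod (p*q))ˣ, IsSquare z → z ^ 2 = 1 → z = 1 := by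
    intro z hz h1
    have h1p := comp p hp hp4 (dvd_mul_right p q) z hz h1
    have h1q := comp q hq hq4 (dvd_mul_left q p) z hz h1
    have : ((z : (ZMod (p*q))ˣ) : ZMod (p*q)) = 1 := by
      apply (ZMod.chineseRemainder hco).injective
      rw [map_one]
      refine Prod.ext ?_ ?_
      · rw [Prod.fst_one, ← h1p]
        simp [ZMod.chineseRemainder, ZMod.castHom_apply]
      · rw [Prod.snd_one, ← h1q]
        simp [ZMod.chineseRemainder, ZMod.castHom_apply]
    exact Units.ext this
  -- maps to
  have hmt : Set.MapsTo (fun x : (ZMod (p * q))ˣ => x ^ 2)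
      {a : (ZMod (p * q))ˣ | IsSquare a} {a : (ZMod (p * q))ˣ | IsSquare a} := by
    intro x _
    exact ⟨x, sq x⟩
  have hinj : Set.InjOn (fun x : (ZMod (p * q))ˣ => x ^ 2)
      {a : (ZMod (p * q))ˣ | IsSquare a} := by
    intro a ha b hb hab
    simp only at hab
    have hs : IsSquare (a * b⁻¹) := by
      obtain ⟨u, hu⟩ := ha
      obtain ⟨v, hv⟩ := hb
      exact ⟨u * v⁻¹, by rw [hu, hv, mul_inv, mul_mul_mul_comm]⟩
    have h1 : (a * b⁻¹) ^ 2 = 1 := by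
      rw [mul_pow, hab]
      group
    have := key _ hs h1
    have hb1 : a * b⁻¹ * b = 1 * b := by rw [this]
    simpa using hb1
  exact ((Set.toFinite _).injOn_iff_bijOn_of_mapsTo hmt).mp hinj
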